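/- arXiv:2112.13155 — 3 statements merged into one kernel-verified Lean document; each statement's English description precedes it below -/
import Mathlib

section
/- For every ℓ ≥ 1 and every integer a ≥ 1, the coefficient of ℏ^a in each of the two series log(1+X_ℓ) − ∑_{k≥1} (B_k/k)·ℓ^k·ℏ^{ℓk}·W_ℓ^{−k} and −∑_{k≥1} B_{k−1}·ℓ^k·ℏ^{ℓk}·W_ℓ^{−k} (that is, in the paper's expressions log(ℓℏ^ℓZ_ℓ) + ψ₀(−Z_ℓ) with the term log P_ℓ removed, and in ψ₁(−Z_ℓ)) lies in the ℚ-linear span of the set of elements P_{d₁}^{b₁}·P_{d₂}^{b₂}⋯P_{d_s}^{b_s}·P_ℓ^{−c} of Λ, where s ≥ 0, c ≥ 1, each d_i is a positive divisor of ℓ, each b_i ≥ 1, b₁+⋯+b_s ≤ c, and a + b₁d₁ + ⋯ + b_s d_s = ℓ·c. -/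
/-!
Common setup: `Λ = ℚ⟦p₁,p₂,…⟧` is realized as `MvPowerSeries ℕ ℚ` (only the variables
`p_d` with `d ≥ 1` occur), `P_d = 1 + p_d`, a unit of `Λ`, and `Λ⟦ℏ⟧ = PowerSeries Λ`.
For `ℓ ≥ 1`, `W_ℓ = ∑_{d∣ℓ} μ(ℓ/d)·ℏ^{ℓ-d}·P_d` (`= ℓ·ℏ^ℓ·Z_ℓ` in the paper's notation)
and `X_ℓ = P_ℓ⁻¹·∑_{d∣ℓ, d≠ℓ} μ(ℓ/d)·ℏ^{ℓ-d}·P_d`, which has zero `ℏ`-constant term and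
`ℏ`-adic order `≥ ⌈ℓ/2⌉`.  Infinite sums of series are written coefficientwise in `ℏ`: in
each case only the finitely many displayed terms contribute to the `ℏ^n`-coefficient, all
other terms having too large an `ℏ`-adic order, so the truncated sums below agree with the
corresponding coefficientwise-convergent infinite sums.  `bernoulli` is Mathlib's Bernoulli
number with `B₁ = -1/2`, and `binom(-k,j) = (-1)^j·C(k+j-1,j)`.
-/

open PowerSeries Finset

noncomputable section

/-- `Λ = ℚ⟦p₁,p₂,…⟧`. -/
abbrev Lam : Type := MvPowerSeries ℕ ℚ

/-- `Λ⟦ℏ⟧`. -/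
abbrev LamH : Type := PowerSeries Lam

/-- `P_d = 1 + p_d`, a unit of `Λ`. -/
def Pd (d : ℕ) : Lam := 1 + MvPowerSeries.X d

/-- Constants `Λ → Λ⟦ℏ⟧`. -/
def Cl : Lam →+* LamH := PowerSeries.C (R := Lam)

/-- Rational constants in `Λ⟦ℏ⟧`. -/
def Cq (q : ℚ) : LamH := PowerSeries.C (R := Lam) (MvPowerSeries.C (σ := ℕ) (R := ℚ) q)

/-- The Möbius function, as a rational number. -/
def muQ (n : ℕ) : ℚ := ((ArithmeticFunction.moebius n : ℤ) : ℚ)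

/-- `W_ℓ = ∑_{d∣ℓ} μ(ℓ/d)·ℏ^{ℓ-d}·P_d ∈ Λ⟦ℏ⟧` (`= ℓ·ℏ^ℓ·Z_ℓ`); its `ℏ`-constant term is
the unit `P_ℓ` of `Λ`, so `W_ℓ` is invertible in `Λ⟦ℏ⟧`. -/
def Wser (ℓ : ℕ) : LamH :=
  ∑ d ∈ ℓ.divisors, Cq (muQ (ℓ / d)) * PowerSeries.X ^ (ℓ - d) * Cl (Pd d)

/-- `X_ℓ = P_ℓ⁻¹·∑_{d∣ℓ, d≠ℓ} μ(ℓ/d)·ℏ^{ℓ-d}·P_d ∈ Λ⟦ℏ⟧`. -/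
def XLser (ℓ : ℕ) : LamH :=
  Cl (Pd ℓ)⁻¹ *
    ∑ d ∈ ℓ.divisors.erase ℓ, Cq (muQ (ℓ / d)) * PowerSeries.X ^ (ℓ - d) * Cl (Pd d)

/-- For `f` with zero `ℏ`-constant term, `log (1+f) = ∑_{j≥1} (-1)^{j-1}·fʲ/j`
(truncated coefficientwise sum; valid since `coeff n (f^j) = 0` for `j > n`). -/
def logOnePlus (f : LamH) : LamH :=
  PowerSeries.mk fun n => ∑ j ∈ Finset.range (n + 1),
    MvPowerSeries.C (σ := ℕ) (R := ℚ) ((-1) ^ (j + 1) / j) * PowerSeries.coeff (R := Lam) n (f ^ j)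

/-- Coefficientwise sum `∑_{k≥0} f k`, for summands with `coeff n (f k) = 0` when `k > n`
(e.g. when `f k` has `ℏ`-adic order `≥ k`). -/
def sumK (f : ℕ → LamH) : LamH :=
  PowerSeries.mk fun n => ∑ k ∈ Finset.range (n + 1), PowerSeries.coeff (R := Lam) n (f k)

/-- Coefficientwise double sum `∑_{k≥0} ∑_{j≥0} f k j`, for summands with
`coeff n (f k j) = 0` when `k > n` or `j > n`. -/
def sumKJ (f : ℕ → ℕ → LamH) : LamH :=
  PowerSeries.mk fun n => ∑ k ∈ Finset.range (n + 1), ∑ j ∈ Finset.range (n + 1),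
    PowerSeries.coeff (R := Lam) n (f k j)

/-- Coefficientwise sum `∑_{ℓ≥0} f ℓ`, for summands with `coeff n (f ℓ) = 0` when
`ℓ > 2n` (e.g. when `f ℓ` has `ℏ`-adic order `≥ ⌈ℓ/2⌉`). -/
def sumL (f : ℕ → LamH) : LamH :=
  PowerSeries.mk fun n => ∑ l ∈ Finset.range (2 * n + 1), PowerSeries.coeff (R := Lam) n (f l)

/-- `T_ℓ = -∑_{j≥1} ((-1)^j/j)·X_ℓ^j
         - ∑_{k≥1}∑_{j≥0} (B_k/k)·binom(-k,j)·ℓ^k·ℏ^{ℓk}·P_ℓ^{-k}·X_ℓ^j ∈ Λ⟦ℏ⟧`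
(the `k = 0` and first-sum `j = 0` terms vanish by the division-by-zero convention). -/
def Tser (ℓ : ℕ) : LamH :=
  -(sumK fun j => Cq ((-1) ^ j / j) * XLser ℓ ^ j)
    - sumKJ fun k j =>
        Cq (bernoulli k / k * ((-1) ^ j * ((k + j - 1).choose j : ℚ)) * (ℓ : ℚ) ^ k) *
          PowerSeries.X ^ (ℓ * k) * Cl (((Pd ℓ)⁻¹) ^ k) * XLser ℓ ^ j

/-- `S_ℓ = ∑_{k≥1}∑_{j≥0} B_{k-1}·binom(-k,j)·ℓ^k·ℏ^{ℓk}·P_ℓ^{-k}·X_ℓ^j ∈ Λ⟦ℏ⟧`. -/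
def Sser (ℓ : ℕ) : LamH :=
  sumKJ fun k j =>
    if k = 0 then 0 else
      Cq (bernoulli (k - 1) * ((-1) ^ j * ((k + j - 1).choose j : ℚ)) * (ℓ : ℚ) ^ k) *
        PowerSeries.X ^ (ℓ * k) * Cl (((Pd ℓ)⁻¹) ^ k) * XLser ℓ ^ j

/-- `∑_{k≥1} (B_k/k)·ℓ^k·ℏ^{ℓk}·W_ℓ^{-k}`, with `W_ℓ⁻¹ = Ring.inverse W_ℓ`. -/
def psi0main (ℓ : ℕ) : LamH :=
  sumK fun k =>
    Cq (bernoulli k / k * (ℓ : ℚ) ^ k) * PowerSeries.X ^ (ℓ * k) * Ring.inverse (Wser ℓ) ^ k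

/-- `∑_{k≥1} B_{k-1}·ℓ^k·ℏ^{ℓk}·W_ℓ^{-k}`, with `W_ℓ⁻¹ = Ring.inverse W_ℓ`. -/
def psi1main (ℓ : ℕ) : LamH :=
  sumK fun k =>
    if k = 0 then 0 else
      Cq (bernoulli (k - 1) * (ℓ : ℚ) ^ k) * PowerSeries.X ^ (ℓ * k) *
        Ring.inverse (Wser ℓ) ^ k

/-- The Laurent monomials `P_{d₁}^{b₁}⋯P_{d_s}^{b_s}·P_ℓ^{-c}` of `Λ` with `c ≥ 1`,
`d_i ∣ ℓ`, `b_i ≥ 1`, `b₁+⋯+b_s ≤ c` and `a + b₁d₁+⋯+b_sd_s = ℓ·c`. -/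
def monomialSet (ℓ a : ℕ) : Set Lam :=
  { x | ∃ (s c : ℕ) (d b : Fin s → ℕ), 1 ≤ c ∧ (∀ i, d i ∣ ℓ) ∧ (∀ i, 1 ≤ b i) ∧
      (∑ i, b i) ≤ c ∧ a + ∑ i, b i * d i = ℓ * c ∧
      x = (∏ i, Pd (d i) ^ b i) * ((Pd ℓ)⁻¹) ^ c }

section AuxLemmas
open Pointwise

lemma constCoeff_Pd (d : ℕ) : MvPowerSeries.constantCoeff (σ := ℕ) (R := ℚ) (Pd d) = 1 := by
  simp [Pd]

lemma Pd_mul_inv (d : ℕ) : Pd d * (Pd d)⁻¹ = 1 :=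
  MvPowerSeries.mul_inv_cancel _ (by rw [constCoeff_Pd]; norm_num)

def Gset (ℓ k m : ℕ) : Set Lam :=
  { x | ∃ (j : ℕ) (d : Fin j → ℕ), (∀ i, d i ∣ ℓ) ∧ m + ∑ i, d i = ℓ * j ∧
      x = (∏ i, Pd (d i)) * ((Pd ℓ)⁻¹) ^ (j + k) }

lemma one_mem_Gset (ℓ : ℕ) : (1 : Lam) ∈ Gset ℓ 0 0 :=
  ⟨0, Fin.elim0, fun i => i.elim0, by simp, by simp⟩

lemma pow_mem_Gset (ℓ k : ℕ) : ((Pd ℓ)⁻¹) ^ k ∈ Gset ℓ k 0 :=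
  ⟨0, Fin.elim0, fun i => i.elim0, by simp, by simp⟩

lemma Gset_mul {ℓ k k' m m' : ℕ} {x y : Lam} (hx : x ∈ Gset ℓ k m) (hy : y ∈ Gset ℓ k' m') :
    x * y ∈ Gset ℓ (k + k') (m + m') := by
  obtain ⟨j, d, hd, hs, rfl⟩ := hx
  obtain ⟨j', d', hd', hs', rfl⟩ := hy
  refine ⟨j + j', Fin.append d d', ?_, ?_, ?_⟩
  · intro i
    refine Fin.addCases (fun i => ?_) (fun i => ?_) i
    · rw [Fin.append_left]; exact hd i
    · rw [Fin.append_right]; exact hd' i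
  · rw [Fin.sum_univ_add]
    simp only [Fin.append_left, Fin.append_right]
    rw [Nat.mul_add, ← hs, ← hs']; ring
  · rw [Fin.prod_univ_add]
    simp only [Fin.append_left, Fin.append_right]
    ring

lemma mul_mem_span {S T U : Set Lam} {x y : Lam}
    (hx : x ∈ Submodule.span ℚ S) (hy : y ∈ Submodule.span ℚ T)
    (hST : S * T ⊆ U) : x * y ∈ Submodule.span ℚ U := by
  have h := Submodule.mul_mem_mul hx hy
  rw [Submodule.span_mul_span] at h
  exact Submodule.span_mono hST h

lemma coeff_CqXpow (q : ℚ) (e m : ℕ) (f : LamH) :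
    PowerSeries.coeff (R := Lam) m (Cq q * PowerSeries.X ^ e * f) =
      if e ≤ m then q • PowerSeries.coeff (R := Lam) (m - e) f else 0 := by
  have h : Cq q * PowerSeries.X ^ e * f
      = PowerSeries.C (R := Lam) (MvPowerSeries.C (σ := ℕ) (R := ℚ) q) * (f * PowerSeries.X ^ e) := by
    unfold Cq; ring
  rw [h, PowerSeries.coeff_C_mul, PowerSeries.coeff_mul_X_pow']
  split_ifs
  · rw [MvPowerSeries.smul_eq_C_mul]
  · exact mul_zero _

lemma coeff_CqXpowC (q : ℚ) (e m : ℕ) (c : Lam) :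
    PowerSeries.coeff (R := Lam) m (Cq q * PowerSeries.X ^ e * Cl c) =
      if e = m then q • c else 0 := by
  rw [coeff_CqXpow]
  by_cases h : e = m
  · subst h
    rw [if_pos rfl, if_pos le_rfl, Nat.sub_self]
    show q • (PowerSeries.coeff (R := Lam) 0) (PowerSeries.C (R := Lam) c) = q • c
    rw [PowerSeries.coeff_C, if_pos rfl]
  · rw [if_neg h]
    split_ifs with h2
    · show q • (PowerSeries.coeff (R := Lam) (m - e)) (PowerSeries.C (R := Lam) c) = 0
      rw [PowerSeries.coeff_C, if_neg (by omega), smul_zero]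
    · rfl

lemma coeff_XLser_mem (ℓ m : ℕ) :
    PowerSeries.coeff (R := Lam) m (XLser ℓ) ∈ Submodule.span ℚ (Gset ℓ 0 m) := by
  unfold XLser
  rw [Finset.mul_sum, map_sum]
  refine Submodule.sum_mem _ fun d hd => ?_
  rw [Finset.mem_erase] at hd
  obtain ⟨hne, hdvd⟩ := hd
  rw [Nat.mem_divisors] at hdvd
  have hdl : d < ℓ :=
    lt_of_le_of_ne (Nat.le_of_dvd (Nat.pos_of_ne_zero hdvd.2) hdvd.1) hne
  have heq : Cl (Pd ℓ)⁻¹ * (Cq (muQ (ℓ / d)) * PowerSeries.X ^ (ℓ - d) * Cl (Pd d)) =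
      Cq (muQ (ℓ / d)) * PowerSeries.X ^ (ℓ - d) * Cl ((Pd ℓ)⁻¹ * Pd d) := by
    rw [map_mul]; ring
  rw [heq, coeff_CqXpowC]
  split_ifs with h
  · refine Submodule.smul_mem _ _ (Submodule.subset_span ?_)
    refine ⟨1, fun _ => d, fun _ => hdvd.1, ?_, ?_⟩
    · rw [Fin.sum_univ_one]; omega
    · rw [Fin.prod_univ_one, pow_one, mul_comm]
  · exact zero_mem _

lemma coeff_XLpow_mem (ℓ : ℕ) (j : ℕ) : ∀ m : ℕ,
    PowerSeries.coeff (R := Lam) m (XLser ℓ ^ j) ∈ Submodule.span ℚ (Gset ℓ 0 m) := by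
  induction j with
  | zero =>
    intro m
    rw [pow_zero, PowerSeries.coeff_one]
    split_ifs with h
    · subst h; exact Submodule.subset_span (one_mem_Gset ℓ)
    · exact zero_mem _
  | succ j ih =>
    intro m
    rw [pow_succ, PowerSeries.coeff_mul]
    refine Submodule.sum_mem _ fun p hp => ?_
    refine mul_mem_span (ih p.1) (coeff_XLser_mem ℓ p.2) ?_
    intro z hz
    rw [Set.mem_mul] at hz
    obtain ⟨u, hu, v, hv, rfl⟩ := hz
    have h := Gset_mul hu hv
    simpa [Finset.HasAntidiagonal.mem_antidiagonal.mp hp] using h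

lemma constCoeff_XLser (ℓ : ℕ) : PowerSeries.coeff (R := Lam) 0 (XLser ℓ) = 0 := by
  unfold XLser
  rw [Finset.mul_sum, map_sum]
  refine Finset.sum_eq_zero fun d hd => ?_
  rw [Finset.mem_erase] at hd
  obtain ⟨hne, hdvd⟩ := hd
  rw [Nat.mem_divisors] at hdvd
  have hdl : d < ℓ :=
    lt_of_le_of_ne (Nat.le_of_dvd (Nat.pos_of_ne_zero hdvd.2) hdvd.1) hne
  have heq : Cl (Pd ℓ)⁻¹ * (Cq (muQ (ℓ / d)) * PowerSeries.X ^ (ℓ - d) * Cl (Pd d)) =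
      Cq (muQ (ℓ / d)) * PowerSeries.X ^ (ℓ - d) * Cl ((Pd ℓ)⁻¹ * Pd d) := by
    rw [map_mul]; ring
  rw [heq, coeff_CqXpowC, if_neg (by omega)]

lemma isUnit_oneX (ℓ : ℕ) : IsUnit (1 + XLser ℓ) := by
  rw [PowerSeries.isUnit_iff_constantCoeff]
  have h : PowerSeries.constantCoeff (R := Lam) (1 + XLser ℓ) = 1 := by
    rw [map_add, map_one, ← PowerSeries.coeff_zero_eq_constantCoeff, constCoeff_XLser,
      add_zero]
  rw [h]; exact isUnit_one

lemma Wser_eq (ℓ : ℕ) (hℓ : 1 ≤ ℓ) : Wser ℓ = Cl (Pd ℓ) * (1 + XLser ℓ) := by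
  have hmem : ℓ ∈ ℓ.divisors := Nat.mem_divisors_self ℓ (by omega)
  unfold Wser XLser
  rw [mul_add, mul_one, ← mul_assoc, ← map_mul, Pd_mul_inv, map_one, one_mul]
  rw [← Finset.add_sum_erase _ _ hmem]
  congr 1
  have hmu : muQ (ℓ / ℓ) = 1 := by
    rw [Nat.div_self (by omega : 0 < ℓ)]; simp [muQ]
  rw [hmu, Nat.sub_self, pow_zero]
  unfold Cq
  simp

lemma Rinv_eq (ℓ : ℕ) (hℓ : 1 ≤ ℓ) :
    Ring.inverse (Wser ℓ) = Cl ((Pd ℓ)⁻¹) * Ring.inverse (1 + XLser ℓ) := by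
  have hu := isUnit_oneX ℓ
  have h1 : Wser ℓ * (Cl ((Pd ℓ)⁻¹) * Ring.inverse (1 + XLser ℓ)) = 1 := by
    rw [Wser_eq ℓ hℓ]
    calc Cl (Pd ℓ) * (1 + XLser ℓ) * (Cl ((Pd ℓ)⁻¹) * Ring.inverse (1 + XLser ℓ))
        = (Cl (Pd ℓ) * Cl ((Pd ℓ)⁻¹)) *
            ((1 + XLser ℓ) * Ring.inverse (1 + XLser ℓ)) := by ring
      _ = 1 := by
          rw [← map_mul, Pd_mul_inv, map_one, Ring.mul_inverse_cancel _ hu, one_mul]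
  have hW : IsUnit (Wser ℓ) := IsUnit.of_mul_eq_one _ h1
  calc Ring.inverse (Wser ℓ)
      = Ring.inverse (Wser ℓ) *
          (Wser ℓ * (Cl ((Pd ℓ)⁻¹) * Ring.inverse (1 + XLser ℓ))) := by rw [h1, mul_one]
    _ = _ := by rw [← mul_assoc, Ring.inverse_mul_cancel _ hW, one_mul]

lemma coeff_one_mem (ℓ m : ℕ) :
    PowerSeries.coeff (R := Lam) m (1 : LamH) ∈ Submodule.span ℚ (Gset ℓ 0 m) := by
  rw [PowerSeries.coeff_one]
  split_ifs with h
  · subst h; exact Submodule.subset_span (one_mem_Gset ℓ)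
  · exact zero_mem _

lemma coeff_oneX_mem (ℓ m : ℕ) :
    PowerSeries.coeff (R := Lam) m (1 + XLser ℓ) ∈ Submodule.span ℚ (Gset ℓ 0 m) := by
  rw [map_add]
  exact add_mem (coeff_one_mem ℓ m) (coeff_XLser_mem ℓ m)

lemma coeff_upow_mem (ℓ k : ℕ) : ∀ m : ℕ,
    PowerSeries.coeff (R := Lam) m ((1 + XLser ℓ) ^ k) ∈ Submodule.span ℚ (Gset ℓ 0 m) := by
  induction k with
  | zero => intro m; rw [pow_zero]; exact coeff_one_mem ℓ m
  | succ k ih =>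
    intro m
    rw [pow_succ, PowerSeries.coeff_mul]
    refine Submodule.sum_mem _ fun p hp => ?_
    refine mul_mem_span (ih p.1) (coeff_oneX_mem ℓ p.2) ?_
    intro z hz
    rw [Set.mem_mul] at hz
    obtain ⟨u, hu, v, hv, rfl⟩ := hz
    have h := Gset_mul hu hv
    simpa [Finset.HasAntidiagonal.mem_antidiagonal.mp hp] using h

lemma coeff_upow_sub_one_mem (ℓ k m : ℕ) :
    PowerSeries.coeff (R := Lam) m ((1 + XLser ℓ) ^ k - 1) ∈ Submodule.span ℚ (Gset ℓ 0 m) := by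
  rw [map_sub]
  exact sub_mem (coeff_upow_mem ℓ k m) (coeff_one_mem ℓ m)

lemma coeff_zero_upow_sub_one (ℓ k : ℕ) :
    PowerSeries.coeff (R := Lam) 0 ((1 + XLser ℓ) ^ k - 1) = 0 := by
  rw [map_sub, PowerSeries.coeff_zero_eq_constantCoeff, map_pow, map_add, map_one,
    ← PowerSeries.coeff_zero_eq_constantCoeff, constCoeff_XLser]
  simp

lemma coeff_Ipow_mem (ℓ k : ℕ) : ∀ m : ℕ,
    PowerSeries.coeff (R := Lam) m ((Ring.inverse (1 + XLser ℓ)) ^ k)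
      ∈ Submodule.span ℚ (Gset ℓ 0 m) := by
  intro m
  induction m using Nat.strong_induction_on with
  | _ m ih =>
    have hu := isUnit_oneX ℓ
    have key : (Ring.inverse (1 + XLser ℓ)) ^ k =
        1 - (Ring.inverse (1 + XLser ℓ)) ^ k * ((1 + XLser ℓ) ^ k - 1) := by
      have h1 : (Ring.inverse (1 + XLser ℓ)) ^ k * (1 + XLser ℓ) ^ k = 1 := by
        rw [← mul_pow, Ring.inverse_mul_cancel _ hu, one_pow]
      rw [mul_sub, h1, mul_one]
      ring
    rw [key, map_sub, PowerSeries.coeff_mul]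
    refine sub_mem (coeff_one_mem ℓ m) (Submodule.sum_mem _ fun p hp => ?_)
    have hpm := Finset.HasAntidiagonal.mem_antidiagonal.mp hp
    by_cases h0 : p.2 = 0
    · rw [h0, coeff_zero_upow_sub_one, mul_zero]
      exact zero_mem _
    · have hlt : p.1 < m := by omega
      refine mul_mem_span (ih p.1 hlt) (coeff_upow_sub_one_mem ℓ k p.2) ?_
      intro z hz
      rw [Set.mem_mul] at hz
      obtain ⟨u, hu', v, hv, rfl⟩ := hz
      have h := Gset_mul hu' hv
      simpa [hpm] using h

lemma Cl_apply (x : Lam) : Cl x = PowerSeries.C (R := Lam) x := rfl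

lemma coeff_Rpow_mem (ℓ : ℕ) (hℓ : 1 ≤ ℓ) (k m : ℕ) :
    PowerSeries.coeff (R := Lam) m (Ring.inverse (Wser ℓ) ^ k)
      ∈ Submodule.span ℚ (Gset ℓ k m) := by
  rw [Rinv_eq ℓ hℓ, mul_pow, ← map_pow, Cl_apply, PowerSeries.coeff_C_mul]
  refine mul_mem_span (Submodule.subset_span (Set.mem_singleton _)) (coeff_Ipow_mem ℓ k m) ?_
  intro z hz
  rw [Set.mem_mul] at hz
  obtain ⟨u, hu, v, hv, rfl⟩ := hz
  rw [Set.mem_singleton_iff] at hu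
  subst hu
  have h := Gset_mul (pow_mem_Gset ℓ k) hv
  simpa using h

lemma Gset_subset_monomialSet {ℓ a k : ℕ} (ha : 1 ≤ a) (hk : ℓ * k ≤ a) :
    Gset ℓ k (a - ℓ * k) ⊆ monomialSet ℓ a := by
  rintro x ⟨j, d, hd, hs, rfl⟩
  refine ⟨j, j + k, d, fun _ => 1, ?_, hd, fun _ => le_rfl, ?_, ?_, ?_⟩
  · by_contra h
    push_neg at h
    have hj : j = 0 := by omega
    have hk0 : k = 0 := by omega
    subst hj; subst hk0
    simp at hs
    omega
  · simp
  · simp only [one_mul]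
    rw [Nat.mul_add, ← hs]
    omega
  · simp


end AuxLemmas

/-- for every `ℓ ≥ 1` and `a ≥ 1`, the `ℏ^a`-coefficient of each of
`log(1+X_ℓ) - ∑_{k≥1}(B_k/k)ℓ^kℏ^{ℓk}W_ℓ^{-k}` (i.e. `log(ℓℏ^ℓZ_ℓ)+ψ₀(-Z_ℓ)` minus
`log P_ℓ`) and `-∑_{k≥1}B_{k-1}ℓ^kℏ^{ℓk}W_ℓ^{-k}` (i.e. `ψ₁(-Z_ℓ)`) lies in the `ℚ`-span
of the monomials `P_{d₁}^{b₁}⋯P_{d_s}^{b_s}·P_ℓ^{-c}` described in `monomialSet`. -/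
theorem statement16 (ℓ : ℕ) (hℓ : 1 ≤ ℓ) (a : ℕ) (ha : 1 ≤ a) :
    PowerSeries.coeff (R := Lam) a (logOnePlus (XLser ℓ) - psi0main ℓ)
        ∈ Submodule.span ℚ (monomialSet ℓ a) ∧
    PowerSeries.coeff (R := Lam) a (-psi1main ℓ) ∈ Submodule.span ℚ (monomialSet ℓ a) := by
  have hsub : ∀ k : ℕ, ℓ * k ≤ a →
      Submodule.span ℚ (Gset ℓ k (a - ℓ * k)) ≤ Submodule.span ℚ (monomialSet ℓ a) :=
    fun k hk => Submodule.span_mono (Gset_subset_monomialSet ha hk)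
  constructor
  · rw [map_sub]
    refine sub_mem ?_ ?_
    · unfold logOnePlus
      rw [PowerSeries.coeff_mk]
      refine Submodule.sum_mem _ fun j hj => ?_
      rw [← MvPowerSeries.smul_eq_C_mul]
      refine Submodule.smul_mem _ _ ?_
      have h := coeff_XLpow_mem ℓ j a
      have h2 : Gset ℓ 0 a = Gset ℓ 0 (a - ℓ * 0) := by norm_num
      rw [h2] at h
      exact hsub 0 (by omega) h
    · unfold psi0main sumK
      rw [PowerSeries.coeff_mk]
      refine Submodule.sum_mem _ fun k hk => ?_
      rw [coeff_CqXpow]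
      split_ifs with hle
      · exact Submodule.smul_mem _ _ (hsub k hle (coeff_Rpow_mem ℓ hℓ k (a - ℓ * k)))
      · exact zero_mem _
  · rw [map_neg]
    refine neg_mem ?_
    unfold psi1main sumK
    rw [PowerSeries.coeff_mk]
    refine Submodule.sum_mem _ fun k hk => ?_
    beta_reduce
    split_ifs with hk0
    · simp
    · rw [coeff_CqXpow]
      split_ifs with hle
      · exact Submodule.smul_mem _ _ (hsub k hle (coeff_Rpow_mem ℓ hℓ k (a - ℓ * k)))
      · exact zero_mem _


end
end

section
/- In Λ⟦ℏ⟧ define 𝒜 := ℏ − P₁·∑_{ℓ≥1} (μ(ℓ)/ℓ)·T_ℓ (the sum over ℓ converges coefficientwise in ℏ, since T_ℓ has ℏ-adic order at least ⌈ℓ/2⌉), and for g ≥ 0 let A_g ∈ Λ be the coefficient of ℏ^g in 𝒜. Then for every g ≥ 1, A_g lies in the ℚ-linear span of the set of elements P_{d₁}^{b₁}·P_{d₂}^{b₂}⋯P_{d_s}^{b_s}·P_ℓ^{−c} of Λ, where ℓ ≥ 1, c ≥ 0, s ≥ 0, each d_i is a positive divisor of ℓ, each b_i ≥ 1, b₁+⋯+b_s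 ≤ c+1, and g + b₁d₁ + ⋯ + b_s d_s = ℓ·c + 1. (This is the structural claim of Corollary 1.2 for the series ∑_g A_g ℏ^g := −P₁·(−ℏ/P₁ + ∑_{ℓ≥1}(μ(ℓ)/ℓ)(−∑_{j≥1}((−1)^j/j)X_ℓ^j − ∑_{k≥1}∑_{j≥0}(B_k/k)binom(−k,j)(ℓℏ^ℓ/P_ℓ)^k X_ℓ^j)).) -/
/-!
Common setup: `Λ = ℚ⟦p₁,p₂,…⟧` is realized as `MvPowerSeries ℕ ℚ` (only the variables
`p_d` with `d ≥ 1` occur), `P_d = 1 + p_d`, a unit of `Λ`, and `Λ⟦ℏ⟧ = PowerSeries Λ`.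
For `ℓ ≥ 1`, `W_ℓ = ∑_{d∣ℓ} μ(ℓ/d)·ℏ^{ℓ-d}·P_d` (`= ℓ·ℏ^ℓ·Z_ℓ` in the paper's notation)
and `X_ℓ = P_ℓ⁻¹·∑_{d∣ℓ, d≠ℓ} μ(ℓ/d)·ℏ^{ℓ-d}·P_d`, which has zero `ℏ`-constant term and
`ℏ`-adic order `≥ ⌈ℓ/2⌉`.  Infinite sums of series are written coefficientwise in `ℏ`: in
each case only the finitely many displayed terms contribute to the `ℏ^n`-coefficient, all
other terms having too large an `ℏ`-adic order, so the truncated sums below agree with the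
corresponding coefficientwise-convergent infinite sums.  `bernoulli` is Mathlib's Bernoulli
number with `B₁ = -1/2`, and `binom(-k,j) = (-1)^j·C(k+j-1,j)`.
-/

open PowerSeries Finset

noncomputable section

/-- `𝒜 = ℏ - P₁·∑_{ℓ≥1} (μ(ℓ)/ℓ)·T_ℓ ∈ Λ⟦ℏ⟧` (the sum over `ℓ` converges coefficientwise
in `ℏ`, since `T_ℓ` has `ℏ`-adic order at least `⌈ℓ/2⌉`; the `ℓ = 0` term vanishes since
`μ(0) = 0`). -/
def Aseries : LamH :=
  PowerSeries.X - Cl (Pd 1) * sumL fun ℓ => Cq (muQ ℓ / ℓ) * Tser ℓ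

/-- The generating set of Statement 17, as a set depending on `g`. -/
def Sgen (g : ℕ) : Set Lam :=
  { x : Lam | ∃ (ℓ c s : ℕ) (d b : Fin s → ℕ), 1 ≤ ℓ ∧ (∀ i, d i ∣ ℓ) ∧
      (∀ i, 1 ≤ b i) ∧ (∑ i, b i) ≤ c + 1 ∧ g + ∑ i, b i * d i = ℓ * c + 1 ∧
      x = (∏ i, Pd (d i) ^ b i) * ((Pd ℓ)⁻¹) ^ c }

lemma mem_Sgen (g ℓ c s : ℕ) (d : Fin s → ℕ) (hl : 1 ≤ ℓ) (hd : ∀ i, d i ∣ ℓ)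
    (hs : s ≤ c + 1) (hsum : g + ∑ i, d i = ℓ * c + 1) :
    (∏ i, Pd (d i)) * ((Pd ℓ)⁻¹) ^ c ∈ Sgen g := by
  refine ⟨ℓ, c, s, d, fun _ => 1, hl, hd, fun _ => le_refl 1, by simpa using hs,
    by simpa using hsum, by simp⟩

lemma coeff_Cq_X_Cl (q : ℚ) (a : Lam) (M n : ℕ) :
    PowerSeries.coeff (R := Lam) n (Cq q * PowerSeries.X ^ M * Cl a) =
      if n = M then q • a else 0 := by
  have h : Cq q * PowerSeries.X ^ M * Cl a
      = PowerSeries.C (R := Lam) (MvPowerSeries.C (σ := ℕ) (R := ℚ) q * a) * PowerSeries.X ^ M := by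
    simp only [Cq, Cl, map_mul]; ring
  rw [h, PowerSeries.coeff_C_mul, PowerSeries.coeff_X_pow, mul_ite, mul_one, mul_zero,
    ← MvPowerSeries.smul_eq_C_mul]

lemma coeff_Cq_mul (q : ℚ) (F : LamH) (n : ℕ) :
    PowerSeries.coeff (R := Lam) n (Cq q * F) = q • PowerSeries.coeff (R := Lam) n F := by
  rw [Cq, PowerSeries.coeff_C_mul, ← MvPowerSeries.smul_eq_C_mul]

lemma XLser_pow (ℓ j : ℕ) :
    XLser ℓ ^ j = Cl (((Pd ℓ)⁻¹) ^ j) *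
      ∑ f ∈ Fintype.piFinset (fun _ : Fin j => ℓ.divisors.erase ℓ),
        (Cq (∏ i, muQ (ℓ / f i)) * PowerSeries.X ^ (∑ i, (ℓ - f i)) * Cl (∏ i, Pd (f i))) := by
  rw [XLser, mul_pow, ← map_pow, Finset.sum_pow']
  congr 1
  refine Finset.sum_congr rfl fun f _ => ?_
  rw [Finset.prod_mul_distrib, Finset.prod_mul_distrib, Finset.prod_pow_eq_pow_sum,
    ← map_prod]
  simp only [Cq, ← map_prod]

lemma key (g ℓ k j : ℕ) (hg : 1 ≤ g) (hl : 1 ≤ ℓ) :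
    Pd 1 * PowerSeries.coeff (R := Lam) g
      (PowerSeries.X ^ (ℓ * k) * Cl (((Pd ℓ)⁻¹) ^ k) * XLser ℓ ^ j)
      ∈ Submodule.span ℚ (Sgen g) := by
  rw [XLser_pow]
  have h2 : PowerSeries.X ^ (ℓ * k) * Cl (((Pd ℓ)⁻¹) ^ k) *
      (Cl (((Pd ℓ)⁻¹) ^ j) *
        ∑ f ∈ Fintype.piFinset (fun _ : Fin j => ℓ.divisors.erase ℓ),
          (Cq (∏ i, muQ (ℓ / f i)) * PowerSeries.X ^ (∑ i, (ℓ - f i)) * Cl (∏ i, Pd (f i))))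
      = ∑ f ∈ Fintype.piFinset (fun _ : Fin j => ℓ.divisors.erase ℓ),
          (Cq (∏ i, muQ (ℓ / f i)) * PowerSeries.X ^ (ℓ * k + ∑ i, (ℓ - f i)) *
            Cl (((Pd ℓ)⁻¹) ^ (k + j) * ∏ i, Pd (f i))) := by
    rw [Finset.mul_sum, Finset.mul_sum]
    refine Finset.sum_congr rfl fun f _ => ?_
    simp only [map_mul, map_pow, pow_add]
    ring
  rw [h2, map_sum, Finset.mul_sum]
  refine Submodule.sum_mem _ fun f hf => ?_
  rw [coeff_Cq_X_Cl]
  split_ifs with hcoef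
  · rw [mul_smul_comm]
    refine Submodule.smul_mem _ _ (Submodule.subset_span ?_)
    have hf' : ∀ i, f i ∈ ℓ.divisors.erase ℓ := Fintype.mem_piFinset.mp hf
    have hdvd : ∀ i, f i ∣ ℓ := fun i => Nat.dvd_of_mem_divisors (Finset.mem_of_mem_erase (hf' i))
    have hle : ∀ i, f i ≤ ℓ := fun i => Nat.le_of_dvd hl (hdvd i)
    have hsum2 : (∑ i, (ℓ - f i)) + ∑ i, f i = j * ℓ := by
      rw [← Finset.sum_add_distrib,
        Finset.sum_congr rfl (fun i _ => Nat.sub_add_cancel (hle i))]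
      simp [mul_comm]
    have heq : Pd 1 * (((Pd ℓ)⁻¹) ^ (k + j) * ∏ i, Pd (f i))
        = (∏ i : Fin (j + 1), Pd ((Fin.cons (1 : ℕ) f : Fin (j + 1) → ℕ) i)) * ((Pd ℓ)⁻¹) ^ (k + j) := by
      rw [Fin.prod_univ_succ]
      simp only [Fin.cons_zero, Fin.cons_succ]
      ring
    rw [heq]
    refine mem_Sgen g ℓ (k + j) (j + 1) ((Fin.cons (1 : ℕ) f : Fin (j + 1) → ℕ)) hl ?_ (by omega) ?_
    · intro i
      refine Fin.cases ?_ ?_ i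
      · exact one_dvd ℓ
      · intro i; exact hdvd i
    · rw [Fin.sum_cons]
      have hmul : ℓ * (k + j) = ℓ * k + j * ℓ := by ring
      omega
  · rw [mul_zero]; exact Submodule.zero_mem _

lemma tser_mem (g ℓ : ℕ) (hg : 1 ≤ g) (hl : 1 ≤ ℓ) :
    Pd 1 * PowerSeries.coeff (R := Lam) g (Tser ℓ) ∈ Submodule.span ℚ (Sgen g) := by
  rw [Tser, map_sub, map_neg, mul_sub, mul_neg]
  refine Submodule.sub_mem _ (Submodule.neg_mem _ ?_) ?_
  · rw [sumK, PowerSeries.coeff_mk, Finset.mul_sum]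
    refine Submodule.sum_mem _ fun j _ => ?_
    rw [coeff_Cq_mul, mul_smul_comm]
    refine Submodule.smul_mem _ _ ?_
    have := key g ℓ 0 j hg hl
    simpa using this
  · rw [sumKJ, PowerSeries.coeff_mk, Finset.mul_sum]
    refine Submodule.sum_mem _ fun k _ => ?_
    rw [Finset.mul_sum]
    refine Submodule.sum_mem _ fun j _ => ?_
    have hassoc : Cq (bernoulli k / k * ((-1) ^ j * ((k + j - 1).choose j : ℚ)) * (ℓ : ℚ) ^ k) *
          PowerSeries.X ^ (ℓ * k) * Cl (((Pd ℓ)⁻¹) ^ k) * XLser ℓ ^ j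
        = Cq (bernoulli k / k * ((-1) ^ j * ((k + j - 1).choose j : ℚ)) * (ℓ : ℚ) ^ k) *
          (PowerSeries.X ^ (ℓ * k) * Cl (((Pd ℓ)⁻¹) ^ k) * XLser ℓ ^ j) := by ring
    rw [hassoc, coeff_Cq_mul, mul_smul_comm]
    exact Submodule.smul_mem _ _ (key g ℓ k j hg hl)

/-- for every `g ≥ 1`, the coefficient `A_g` of `ℏ^g` in `𝒜` lies in the
`ℚ`-span of the monomials `P_{d₁}^{b₁}⋯P_{d_s}^{b_s}·P_ℓ^{-c}` of `Λ` with `ℓ ≥ 1`,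
`d_i ∣ ℓ`, `b_i ≥ 1`, `b₁+⋯+b_s ≤ c+1` and `g + b₁d₁+⋯+b_sd_s = ℓ·c + 1`. -/
theorem statement17 (g : ℕ) (hg : 1 ≤ g) :
    PowerSeries.coeff (R := Lam) g Aseries
      ∈ Submodule.span ℚ
          { x : Lam | ∃ (ℓ c s : ℕ) (d b : Fin s → ℕ), 1 ≤ ℓ ∧ (∀ i, d i ∣ ℓ) ∧
              (∀ i, 1 ≤ b i) ∧ (∑ i, b i) ≤ c + 1 ∧ g + ∑ i, b i * d i = ℓ * c + 1 ∧
              x = (∏ i, Pd (d i) ^ b i) * ((Pd ℓ)⁻¹) ^ c } := by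
  show _ ∈ Submodule.span ℚ (Sgen g)
  rw [Aseries, map_sub]
  refine Submodule.sub_mem _ ?_ ?_
  · rw [PowerSeries.coeff_X]
    split_ifs with h
    · refine Submodule.subset_span ?_
      have := mem_Sgen g 1 0 0 (fun i => i.elim0) le_rfl (fun i => i.elim0) (by omega)
        (by simpa using h)
      simpa using this
    · exact Submodule.zero_mem _
  · rw [Cl, PowerSeries.coeff_C_mul, sumL, PowerSeries.coeff_mk, Finset.mul_sum]
    refine Submodule.sum_mem _ fun l _ => ?_
    rw [coeff_Cq_mul, mul_smul_comm]
    rcases Nat.eq_zero_or_pos l with rfl | hl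
    · simp [muQ]
    · exact Submodule.smul_mem _ _ (tser_mem g l hg hl)

end
end

section
/- In Λ⟦ℏ⟧ define Q := −ℏ·P₁^{−1} + ∑_{ℓ≥1} (μ(ℓ)/ℓ)·T_ℓ and 𝒞 := −(P₁/2)·( Q² + ∑_{ℓ≥1} (μ(ℓ)/ℓ)·T_{2ℓ} − ∑_{ℓ≥1} (μ(ℓ)/ℓ)²·S_ℓ − ℏ²·P₁^{−2} ) (all sums over ℓ converge coefficientwise in ℏ), and for g ≥ 0 let C_g ∈ Λ be the coefficient of ℏ^g in 𝒞. Then for every g ≥ 1, C_g lies in the ℚ-linear span of the set of elements P_{d₁}^{b₁}·P_{d₂}^{b₂}⋯P_{d_s}^{b_s}·P_{ℓ₁}^{−c₁}·P_{ℓ₂}^{−c₂} of Λ, where ℓ₁, ℓ₂ ≥ 1, c₁, c₂ ≥ 0, s ≥ 0, each d_i divides ℓ₁ or divides ℓ₂, each b_i ≥ 1, b₁+⋯+b_s ≤ c₁+c₂+1, and g + b₁d₁ + ⋯ + b_s d_s = ℓ₁c₁ + ℓ₂c₂ + 1. (This is the structural claim of Corollary 1.2 for the series ∑_g C_g ℏ^g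 defined by the paper's equation for C_g.) -/
/-!
Common setup: `Λ = ℚ⟦p₁,p₂,…⟧` is realized as `MvPowerSeries ℕ ℚ` (only the variables
`p_d` with `d ≥ 1` occur), `P_d = 1 + p_d`, a unit of `Λ`, and `Λ⟦ℏ⟧ = PowerSeries Λ`.
For `ℓ ≥ 1`, `W_ℓ = ∑_{d∣ℓ} μ(ℓ/d)·ℏ^{ℓ-d}·P_d` (`= ℓ·ℏ^ℓ·Z_ℓ` in the paper's notation)
and `X_ℓ = P_ℓ⁻¹·∑_{d∣ℓ, d≠ℓ} μ(ℓ/d)·ℏ^{ℓ-d}·P_d`, which has zero `ℏ`-constant term and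
`ℏ`-adic order `≥ ⌈ℓ/2⌉`.  Infinite sums of series are written coefficientwise in `ℏ`: in
each case only the finitely many displayed terms contribute to the `ℏ^n`-coefficient, all
other terms having too large an `ℏ`-adic order, so the truncated sums below agree with the
corresponding coefficientwise-convergent infinite sums.  `bernoulli` is Mathlib's Bernoulli
number with `B₁ = -1/2`, and `binom(-k,j) = (-1)^j·C(k+j-1,j)`.
-/

open PowerSeries Finset

noncomputable section

/-- `Q = -ℏ·P₁⁻¹ + ∑_{ℓ≥1} (μ(ℓ)/ℓ)·T_ℓ ∈ Λ⟦ℏ⟧` (the sum over `ℓ` converges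
coefficientwise in `ℏ`, since `T_ℓ` has `ℏ`-adic order at least `⌈ℓ/2⌉`; the `ℓ = 0` term
vanishes since `μ(0) = 0`). -/
def Qseries : LamH :=
  -(PowerSeries.X * Cl ((Pd 1)⁻¹)) + sumL fun ℓ => Cq (muQ ℓ / ℓ) * Tser ℓ

/-- `𝒞 = -(P₁/2)·(Q² + ∑_{ℓ≥1}(μ(ℓ)/ℓ)·T_{2ℓ} - ∑_{ℓ≥1}(μ(ℓ)/ℓ)²·S_ℓ - ℏ²·P₁⁻²)`. -/
def Cseries : LamH :=
  -(Cq (1 / 2) * Cl (Pd 1)) *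
    (Qseries ^ 2 + (sumL fun ℓ => Cq (muQ ℓ / ℓ) * Tser (2 * ℓ))
      - (sumL fun ℓ => Cq ((muQ ℓ / ℓ) ^ 2) * Sser ℓ)
      - PowerSeries.X ^ 2 * Cl (((Pd 1)⁻¹) ^ 2))


namespace Aux18

/-- Single-`ℓ` generating monomials of `ℏ`-weight `n`. -/
def gen1 (ℓ n : ℕ) : Set Lam :=
  { x | ∃ (c s : ℕ) (d b : Fin s → ℕ), (∀ i, d i ∣ ℓ) ∧ (∀ i, 1 ≤ b i) ∧
      (∑ i, b i) ≤ c ∧ n + ∑ i, b i * d i = ℓ * c ∧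
      x = (∏ i, Pd (d i) ^ b i) * ((Pd ℓ)⁻¹) ^ c }

def genU (n : ℕ) : Set Lam := { x | ∃ ℓ, 1 ≤ ℓ ∧ x ∈ gen1 ℓ n }

def gen2 (n : ℕ) : Set Lam :=
  { x | ∃ (ℓ₁ ℓ₂ c₁ c₂ s : ℕ) (d b : Fin s → ℕ), 1 ≤ ℓ₁ ∧ 1 ≤ ℓ₂ ∧
      (∀ i, d i ∣ ℓ₁ ∨ d i ∣ ℓ₂) ∧ (∀ i, 1 ≤ b i) ∧
      (∑ i, b i) ≤ c₁ + c₂ ∧ n + ∑ i, b i * d i = ℓ₁ * c₁ + ℓ₂ * c₂ ∧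
      x = (∏ i, Pd (d i) ^ b i) * ((Pd ℓ₁)⁻¹) ^ c₁ * ((Pd ℓ₂)⁻¹) ^ c₂ }

/-- The target set of the theorem, as a named set. -/
def genF (g : ℕ) : Set Lam :=
  { x : Lam | ∃ (ℓ₁ ℓ₂ c₁ c₂ s : ℕ) (d b : Fin s → ℕ), 1 ≤ ℓ₁ ∧ 1 ≤ ℓ₂ ∧
      (∀ i, d i ∣ ℓ₁ ∨ d i ∣ ℓ₂) ∧ (∀ i, 1 ≤ b i) ∧
      (∑ i, b i) ≤ c₁ + c₂ + 1 ∧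
      g + ∑ i, b i * d i = ℓ₁ * c₁ + ℓ₂ * c₂ + 1 ∧
      x = (∏ i, Pd (d i) ^ b i) * ((Pd ℓ₁)⁻¹) ^ c₁ * ((Pd ℓ₂)⁻¹) ^ c₂ }

lemma gen1_mul {ℓ a b : ℕ} {x y : Lam} (hx : x ∈ gen1 ℓ a) (hy : y ∈ gen1 ℓ b) :
    x * y ∈ gen1 ℓ (a + b) := by
  obtain ⟨c₁, s₁, d₁, b₁, hd₁, hb₁, hs₁, hw₁, rfl⟩ := hx
  obtain ⟨c₂, s₂, d₂, b₂, hd₂, hb₂, hs₂, hw₂, rfl⟩ := hy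
  refine ⟨c₁ + c₂, s₁ + s₂, Fin.append d₁ d₂, Fin.append b₁ b₂, ?_, ?_, ?_, ?_, ?_⟩
  · intro i; refine Fin.addCases (fun j => ?_) (fun j => ?_) i <;> simp [hd₁, hd₂]
  · intro i; refine Fin.addCases (fun j => ?_) (fun j => ?_) i <;> simp [hb₁, hb₂]
  · rw [Fin.sum_univ_add]; simp only [Fin.append_left, Fin.append_right]; omega
  · rw [Fin.sum_univ_add]; simp only [Fin.append_left, Fin.append_right]
    rw [Nat.mul_add]; omega
  · rw [Fin.prod_univ_add]; simp only [Fin.append_left, Fin.append_right]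
    rw [pow_add]; ring

lemma genU_mul {a b : ℕ} {x y : Lam} (hx : x ∈ genU a) (hy : y ∈ genU b) :
    x * y ∈ gen2 (a + b) := by
  obtain ⟨ℓ₁, hℓ₁, c₁, s₁, d₁, b₁, hd₁, hb₁, hs₁, hw₁, rfl⟩ := hx
  obtain ⟨ℓ₂, hℓ₂, c₂, s₂, d₂, b₂, hd₂, hb₂, hs₂, hw₂, rfl⟩ := hy
  refine ⟨ℓ₁, ℓ₂, c₁, c₂, s₁ + s₂, Fin.append d₁ d₂, Fin.append b₁ b₂, hℓ₁, hℓ₂,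
    ?_, ?_, ?_, ?_, ?_⟩
  · intro i; refine Fin.addCases (fun j => ?_) (fun j => ?_) i <;> simp [hd₁, hd₂]
  · intro i; refine Fin.addCases (fun j => ?_) (fun j => ?_) i <;> simp [hb₁, hb₂]
  · rw [Fin.sum_univ_add]; simp only [Fin.append_left, Fin.append_right]; omega
  · rw [Fin.sum_univ_add]; simp only [Fin.append_left, Fin.append_right]; omega
  · rw [Fin.prod_univ_add]; simp only [Fin.append_left, Fin.append_right]
    ring

lemma gen1_subset_gen2 {ℓ n : ℕ} (hℓ : 1 ≤ ℓ) : gen1 ℓ n ⊆ gen2 n := by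
  rintro x ⟨c, s, d, b, hd, hb, hs, hw, rfl⟩
  exact ⟨ℓ, 1, c, 0, s, d, b, hℓ, le_refl 1, fun i => Or.inl (hd i), hb,
    by omega, by simpa using hw, by simp⟩

lemma one_mem_gen1 (ℓ : ℕ) : (1 : Lam) ∈ gen1 ℓ 0 :=
  ⟨0, 0, fun i => i.elim0, fun i => i.elim0, fun i => i.elim0, fun i => i.elim0,
    by simp, by simp, by simp⟩

lemma pinv_mem_gen1 (ℓ k : ℕ) : ((Pd ℓ)⁻¹ : Lam) ^ k ∈ gen1 ℓ (ℓ * k) :=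
  ⟨k, 0, fun i => i.elim0, fun i => i.elim0, fun i => i.elim0, fun i => i.elim0,
    by simp, by simp, by simp⟩

lemma d_mem_gen1 {ℓ d : ℕ} (hd : d ∣ ℓ) (hdl : d ≤ ℓ) :
    ((Pd ℓ)⁻¹ * Pd d : Lam) ∈ gen1 ℓ (ℓ - d) :=
  ⟨1, 1, fun _ => d, fun _ => 1, fun _ => hd, fun _ => le_refl 1,
    by simp, by simp; omega, by simp [mul_comm]⟩

lemma span_mul_span_mem {S T U : Set Lam} (h : ∀ x ∈ S, ∀ y ∈ T, x * y ∈ U)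
    {x y : Lam} (hx : x ∈ Submodule.span ℚ S) (hy : y ∈ Submodule.span ℚ T) :
    x * y ∈ Submodule.span ℚ U := by
  have hle : Submodule.span ℚ S * Submodule.span ℚ T ≤ Submodule.span ℚ U := by
    rw [Submodule.span_mul_span]
    apply Submodule.span_mono
    rintro z hz
    rw [Set.mem_mul] at hz
    obtain ⟨a, ha, b, hb, rfl⟩ := hz
    exact h a ha b hb
  exact hle (Submodule.mul_mem_mul hx hy)

lemma coeff_mul_mem {A B C : ℕ → Submodule ℚ Lam}
    (h : ∀ a b : ℕ, ∀ x ∈ A a, ∀ y ∈ B b, x * y ∈ C (a + b))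
    {F G : LamH} (hF : ∀ m, PowerSeries.coeff (R := Lam) m F ∈ A m)
    (hG : ∀ m, PowerSeries.coeff (R := Lam) m G ∈ B m) (n : ℕ) :
    PowerSeries.coeff (R := Lam) n (F * G) ∈ C n := by
  rw [PowerSeries.coeff_mul]
  refine Submodule.sum_mem _ fun p hp => ?_
  have := h p.1 p.2 _ (hF p.1) _ (hG p.2)
  rwa [Finset.HasAntidiagonal.mem_antidiagonal.mp hp] at this

lemma coeff_mono (q : ℚ) (m : ℕ) (c : Lam) (n : ℕ) :
    PowerSeries.coeff (R := Lam) n (Cq q * PowerSeries.X ^ m * Cl c)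
      = if n = m then q • c else 0 := by
  have h1 : Cq q * PowerSeries.X ^ m * Cl c = Cl (q • c) * PowerSeries.X ^ m := by
    rw [MvPowerSeries.smul_eq_C_mul, map_mul]
    show _ = Cl (MvPowerSeries.C (σ := ℕ) (R := ℚ) q) * Cl c * _
    rw [Cq, Cl]; ring
  rw [h1, Cl, PowerSeries.coeff_C_mul_X_pow]

lemma coeff_Cq_mul (q : ℚ) (F : LamH) (n : ℕ) :
    PowerSeries.coeff (R := Lam) n (Cq q * F) = q • PowerSeries.coeff (R := Lam) n F := by
  rw [Cq, PowerSeries.coeff_C_mul, ← MvPowerSeries.smul_eq_C_mul]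

lemma coeff_Cl_mul (a : Lam) (F : LamH) (n : ℕ) :
    PowerSeries.coeff (R := Lam) n (Cl a * F) = a * PowerSeries.coeff (R := Lam) n F := by
  rw [Cl, PowerSeries.coeff_C_mul]

def M1 (ℓ n : ℕ) : Submodule ℚ Lam := Submodule.span ℚ (gen1 ℓ n)
def MU (n : ℕ) : Submodule ℚ Lam := Submodule.span ℚ (genU n)
def M2 (n : ℕ) : Submodule ℚ Lam := Submodule.span ℚ (gen2 n)

/-- Every `ℏ`-coefficient of `F` lies in the single-`ℓ` span of matching weight. -/
def good1 (ℓ : ℕ) (F : LamH) : Prop := ∀ n, PowerSeries.coeff (R := Lam) n F ∈ M1 ℓ n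

lemma good1_mul {ℓ : ℕ} {F G : LamH} (hF : good1 ℓ F) (hG : good1 ℓ G) :
    good1 ℓ (F * G) :=
  coeff_mul_mem
    (fun _ _ x hx y hy =>
      span_mul_span_mem (fun _ hu _ hv => gen1_mul hu hv) hx hy) hF hG

lemma good1_one (ℓ : ℕ) : good1 ℓ 1 := by
  intro n
  rw [PowerSeries.coeff_one]
  split
  · subst ‹n = 0›; exact Submodule.subset_span (one_mem_gen1 ℓ)
  · exact zero_mem _

lemma good1_pow {ℓ : ℕ} {F : LamH} (hF : good1 ℓ F) (j : ℕ) : good1 ℓ (F ^ j) := by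
  induction j with
  | zero => simpa using good1_one ℓ
  | succ j ih => rw [pow_succ]; exact good1_mul ih hF

lemma good1_Cq_mul {ℓ : ℕ} {F : LamH} (q : ℚ) (hF : good1 ℓ F) : good1 ℓ (Cq q * F) := by
  intro n; rw [coeff_Cq_mul]; exact Submodule.smul_mem _ _ (hF n)

lemma good1_monoPinv (ℓ : ℕ) (q : ℚ) (k : ℕ) :
    good1 ℓ (Cq q * PowerSeries.X ^ (ℓ * k) * Cl (((Pd ℓ)⁻¹) ^ k)) := by
  intro n; rw [coeff_mono]
  split
  · exact Submodule.smul_mem _ _ (Submodule.subset_span (by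
      subst ‹n = ℓ * k›; exact pinv_mem_gen1 ℓ k))
  · exact zero_mem _

lemma good1_XL (ℓ : ℕ) : good1 ℓ (XLser ℓ) := by
  intro n
  rw [XLser, Finset.mul_sum, map_sum]
  refine Submodule.sum_mem _ fun d hd => ?_
  rw [Finset.mem_erase, Nat.mem_divisors] at hd
  obtain ⟨hne, hdvd, hl0⟩ := hd
  have h1 : Cl (Pd ℓ)⁻¹ * (Cq (muQ (ℓ / d)) * PowerSeries.X ^ (ℓ - d) * Cl (Pd d))
      = Cq (muQ (ℓ / d)) * PowerSeries.X ^ (ℓ - d) * Cl ((Pd ℓ)⁻¹ * Pd d) := by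
    rw [map_mul]; ring
  rw [h1, coeff_mono]
  split
  · exact Submodule.smul_mem _ _ (Submodule.subset_span (by
      subst ‹n = ℓ - d›
      exact d_mem_gen1 hdvd (Nat.le_of_dvd (Nat.pos_of_ne_zero hl0) hdvd)))
  · exact zero_mem _

lemma good1_T (ℓ : ℕ) : good1 ℓ (Tser ℓ) := by
  intro n
  rw [Tser, map_sub, map_neg, sumK, sumKJ, PowerSeries.coeff_mk, PowerSeries.coeff_mk]
  refine Submodule.sub_mem _ (Submodule.neg_mem _ ?_) ?_
  · exact Submodule.sum_mem _ fun j _ =>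
      good1_Cq_mul _ (good1_pow (good1_XL ℓ) j) n
  · refine Submodule.sum_mem _ fun k _ => Submodule.sum_mem _ fun j _ => ?_
    exact good1_mul (good1_monoPinv ℓ _ k) (good1_pow (good1_XL ℓ) j) n

lemma good1_S (ℓ : ℕ) : good1 ℓ (Sser ℓ) := by
  intro n
  rw [Sser, sumKJ, PowerSeries.coeff_mk]
  refine Submodule.sum_mem _ fun k _ => Submodule.sum_mem _ fun j _ => ?_
  split
  · simp
  · exact good1_mul (good1_monoPinv ℓ _ k) (good1_pow (good1_XL ℓ) j) n

lemma M1_le_MU {ℓ n : ℕ} (hℓ : 1 ≤ ℓ) : M1 ℓ n ≤ MU n :=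
  Submodule.span_mono fun x hx => ⟨ℓ, hℓ, hx⟩

lemma M1_le_M2 {ℓ n : ℕ} (hℓ : 1 ≤ ℓ) : M1 ℓ n ≤ M2 n :=
  Submodule.span_mono (gen1_subset_gen2 hℓ)

lemma muQ_zero : muQ 0 = 0 := by simp [muQ]

lemma coeff_X_pow_Cl (m : ℕ) (c : Lam) (n : ℕ) :
    PowerSeries.coeff (R := Lam) n (PowerSeries.X ^ m * Cl c)
      = if n = m then c else 0 := by
  have := coeff_mono 1 m c n
  rw [show Cq (1:ℚ) = 1 by simp [Cq], one_mul, one_smul] at this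
  exact this

lemma goodU_Q : ∀ n, PowerSeries.coeff (R := Lam) n Qseries ∈ MU n := by
  intro n
  rw [Qseries, map_add, map_neg]
  refine Submodule.add_mem _ (Submodule.neg_mem _ ?_) ?_
  · have h1 : (PowerSeries.X : LamH) * Cl ((Pd 1)⁻¹)
        = PowerSeries.X ^ 1 * Cl (((Pd 1)⁻¹) ^ 1) := by simp
    rw [h1, coeff_X_pow_Cl]
    split
    · refine Submodule.subset_span ⟨1, le_refl 1, ?_⟩
      subst ‹n = 1›
      simpa using pinv_mem_gen1 1 1
    · exact zero_mem _
  · rw [sumL, PowerSeries.coeff_mk]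
    refine Submodule.sum_mem _ fun l _ => ?_
    rcases Nat.eq_zero_or_pos l with rfl | hl
    · simp [muQ_zero, Cq]
    · rw [coeff_Cq_mul]
      exact Submodule.smul_mem _ _ (M1_le_MU hl (good1_T l n))

lemma coeff_bracket (n : ℕ) :
    PowerSeries.coeff (R := Lam) n
      (Qseries ^ 2 + (sumL fun ℓ => Cq (muQ ℓ / ℓ) * Tser (2 * ℓ))
        - (sumL fun ℓ => Cq ((muQ ℓ / ℓ) ^ 2) * Sser ℓ)
        - PowerSeries.X ^ 2 * Cl (((Pd 1)⁻¹) ^ 2)) ∈ M2 n := by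
  rw [map_sub, map_sub, map_add]
  refine Submodule.sub_mem _ (Submodule.sub_mem _ (Submodule.add_mem _ ?_ ?_) ?_) ?_
  · rw [sq]
    exact coeff_mul_mem
      (fun _ _ x hx y hy =>
        span_mul_span_mem (fun _ hu _ hv => genU_mul hu hv) hx hy)
      goodU_Q goodU_Q n
  · rw [sumL, PowerSeries.coeff_mk]
    refine Submodule.sum_mem _ fun l _ => ?_
    rcases Nat.eq_zero_or_pos l with rfl | hl
    · simp [muQ_zero, Cq]
    · rw [coeff_Cq_mul]
      exact Submodule.smul_mem _ _ (M1_le_M2 (by omega) (good1_T (2 * l) n))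
  · rw [sumL, PowerSeries.coeff_mk]
    refine Submodule.sum_mem _ fun l _ => ?_
    rcases Nat.eq_zero_or_pos l with rfl | hl
    · simp [muQ_zero, Cq]
    · rw [coeff_Cq_mul]
      exact Submodule.smul_mem _ _ (M1_le_M2 hl (good1_S l n))
  · rw [coeff_X_pow_Cl]
    split
    · refine M1_le_M2 (le_refl 1) (Submodule.subset_span ?_)
      subst ‹n = 2›
      simpa using pinv_mem_gen1 1 2
    · exact zero_mem _

lemma mul_Pd1_mem {g : ℕ} {y : Lam} (hy : y ∈ M2 g) :
    Pd 1 * y ∈ Submodule.span ℚ (genF g) := by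
  have h : Pd 1 * y = (LinearMap.mulLeft ℚ (Pd 1)) y := rfl
  rw [h]
  have hmap : Submodule.map (LinearMap.mulLeft ℚ (Pd 1)) (M2 g)
      ≤ Submodule.span ℚ (genF g) := by
    rw [M2, Submodule.map_span]
    apply Submodule.span_mono
    rintro x ⟨z, ⟨ℓ₁, ℓ₂, c₁, c₂, s, d, b, hℓ₁, hℓ₂, hd, hb, hs, hw, rfl⟩, rfl⟩
    refine ⟨ℓ₁, ℓ₂, c₁, c₂, s + 1, Fin.cons 1 d, Fin.cons 1 b, hℓ₁, hℓ₂,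
      ?_, ?_, ?_, ?_, ?_⟩
    · intro i
      refine Fin.cases ?_ (fun j => ?_) i
      · exact Or.inl (by simp)
      · simpa using hd j
    · intro i
      refine Fin.cases ?_ (fun j => ?_) i
      · simp
      · simpa using hb j
    · rw [Fin.sum_univ_succ]; simpa using by omega
    · rw [Fin.sum_univ_succ]; simp only [Fin.cons_zero, Fin.cons_succ]; omega
    · rw [Fin.prod_univ_succ]; simp only [Fin.cons_zero, Fin.cons_succ]
      show LinearMap.mulLeft ℚ (Pd 1) _ = _
      simp only [LinearMap.mulLeft_apply]
      ring
  exact hmap (Submodule.mem_map_of_mem hy)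

end Aux18

/-- for every `g ≥ 1`, the coefficient `C_g` of `ℏ^g` in `𝒞` lies in the
`ℚ`-span of the monomials `P_{d₁}^{b₁}⋯P_{d_s}^{b_s}·P_{ℓ₁}^{-c₁}·P_{ℓ₂}^{-c₂}` of `Λ`
with `ℓ₁, ℓ₂ ≥ 1`, each `d_i` dividing `ℓ₁` or `ℓ₂`, `b_i ≥ 1`, `b₁+⋯+b_s ≤ c₁+c₂+1` and
`g + b₁d₁+⋯+b_sd_s = ℓ₁c₁ + ℓ₂c₂ + 1`. -/
theorem statement18 (g : ℕ) (hg : 1 ≤ g) :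
    PowerSeries.coeff (R := Lam) g Cseries
      ∈ Submodule.span ℚ
          { x : Lam | ∃ (ℓ₁ ℓ₂ c₁ c₂ s : ℕ) (d b : Fin s → ℕ), 1 ≤ ℓ₁ ∧ 1 ≤ ℓ₂ ∧
              (∀ i, d i ∣ ℓ₁ ∨ d i ∣ ℓ₂) ∧ (∀ i, 1 ≤ b i) ∧
              (∑ i, b i) ≤ c₁ + c₂ + 1 ∧
              g + ∑ i, b i * d i = ℓ₁ * c₁ + ℓ₂ * c₂ + 1 ∧
              x = (∏ i, Pd (d i) ^ b i) * ((Pd ℓ₁)⁻¹) ^ c₁ * ((Pd ℓ₂)⁻¹) ^ c₂ } := by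
  show PowerSeries.coeff (R := Lam) g Cseries ∈ Submodule.span ℚ (Aux18.genF g)
  rw [Cseries, neg_mul, mul_assoc, map_neg, Aux18.coeff_Cq_mul, Aux18.coeff_Cl_mul]
  exact Submodule.neg_mem _
    (Submodule.smul_mem _ _ (Aux18.mul_Pd1_mem (Aux18.coeff_bracket g)))

end
end
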